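/- For μ ∈ (1, 3), the logistic map ℓ_μ has exactly two nodes in its chain-recurrent set: {0} and {1 - 1/μ}; equivalently, the chain-recurrent set of ℓ_μ on [0,1] equals {0, 1 - 1/μ} when μ ∈ (1,3). -/

import Mathlib

open Filter Topology Set

/-!
Every orbit starting in `(0, 1)` converges to `p = 1 - 1/μ`: one step lands in an interval
`[a, μ/4]` invariant under `ℓ_μ`, and there `ℓ_μ ∘ ℓ_μ` contracts towards `p`, because
`ℓ_μ (ℓ_μ y) - p = (y - p) (1 - μ y) (1 - μ ℓ_μ y)` and the product of the last two factors has
modulus `< 1` for `μ < 3`. Since `|ℓ_μ'(p)| = |2 - μ| < 1`, a small closed ball around `p` cannot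
be left by an `ε`-chain once `ε` is small. An `ε`-chain from `x ∉ {0, p}` back to `x`, repeated
many times, is a long chain; by continuity of finitely many iterates it first shadows the orbit
of `x` into that ball, and then it is stuck there, so it cannot end at `x`. Points above
`μ/4 = max ℓ_μ` are not even close to the image of `ℓ_μ`.
-/

/-- The logistic map `ℓ_μ(x) = μ x (1 - x)`. -/
def logistic (μ x : ℝ) : ℝ := μ * x * (1 - x)

/-- An `ε`-chain from `p` to `q` for `f` lying in the space `[0,1]`. -/
def EpsChain (f : ℝ → ℝ) (ε p q : ℝ) : Prop :=
  ∃ n : ℕ, 1 ≤ n ∧ ∃ x : ℕ → ℝ, x 0 = p ∧ x n = q ∧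
    (∀ i ≤ n, x i ∈ Set.Icc (0 : ℝ) 1) ∧
    ∀ i < n, |f (x i) - x (i + 1)| ≤ ε

/-- A point of `[0,1]` is chain-recurrent if for every `ε > 0` there is an
`ε`-chain from it to itself. -/
def ChainRecurrent (f : ℝ → ℝ) (p : ℝ) : Prop :=
  p ∈ Set.Icc (0 : ℝ) 1 ∧ ∀ ε > 0, EpsChain f ε p p

section Dynamics

variable {X : Type*} [MetricSpace X] {f : X → X}

def IsPseudoOrbit (f : X → X) (ε : ℝ) (n : ℕ) (z : ℕ → X) : Prop :=
  ∀ i < n, dist (f (z i)) (z (i + 1)) ≤ ε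

theorem IsPseudoOrbit.mono {ε ε' : ℝ} {n n' : ℕ} {z : ℕ → X} (h : IsPseudoOrbit f ε n z)
    (hε : ε ≤ ε') (hn : n' ≤ n) : IsPseudoOrbit f ε' n' z :=
  fun i hi => (h i (hi.trans_le hn)).trans hε

theorem IsPseudoOrbit.comp_mod {ε : ℝ} {n : ℕ} {z : ℕ → X} (h : IsPseudoOrbit f ε n z)
    (hn : 0 < n) (hz : z n = z 0) (m : ℕ) : IsPseudoOrbit f ε m (fun i => z (i % n)) := by
  intro i _
  have hi := Nat.mod_lt i hn
  dsimp only
  rw [← Nat.mod_add_mod]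
  rcases (show i % n + 1 ≤ n from hi).lt_or_eq with hlt | heq
  · rw [Nat.mod_eq_of_lt hlt]
    exact h _ hi
  · rw [heq, Nat.mod_self, ← hz]
    simpa only [heq] using h _ hi

theorem dist_iterate_lt_of_isPseudoOrbit (hf : Continuous f) (x : X) (N : ℕ) {η : ℝ}
    (hη : 0 < η) : ∃ ε > 0, ∀ z : ℕ → X, z 0 = x → IsPseudoOrbit f ε N z →
      dist (z N) (f^[N] x) < η := by
  induction N generalizing η with
  | zero => exact ⟨1, one_pos, fun z hz _ => by simpa [hz] using hη⟩
  | succ N ih =>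
    obtain ⟨η₁, hη₁, hfη₁⟩ := Metric.continuous_iff.1 hf (f^[N] x) (η / 2) (half_pos hη)
    obtain ⟨ε, hε, hshadow⟩ := ih hη₁
    refine ⟨min ε (η / 2), lt_min hε (half_pos hη), fun z hz hzε => ?_⟩
    have hclose : dist (f (z N)) (f^[N + 1] x) < η / 2 := by
      rw [Function.iterate_succ_apply']
      exact hfη₁ _ (hshadow z hz (hzε.mono (min_le_left _ _) N.le_succ))
    calc dist (z (N + 1)) (f^[N + 1] x)
        ≤ dist (f (z N)) (z (N + 1)) + dist (f (z N)) (f^[N + 1] x) := dist_triangle_left _ _ _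
      _ < η / 2 + η / 2 := add_lt_add_of_le_of_lt ((hzε N N.lt_succ_self).trans
          (min_le_right _ _)) hclose
      _ = η := add_halves η

theorem IsPseudoOrbit.mem_of_mem {ε : ℝ} {n m : ℕ} {z : ℕ → X} {U : Set X}
    (h : IsPseudoOrbit f ε n z) (hU : ∀ y ∈ U, ∀ w, dist (f y) w ≤ ε → w ∈ U)
    (hm : z m ∈ U) (hmn : m ≤ n) : z n ∈ U := by
  induction n, hmn using Nat.le_induction with
  | base => exact hm
  | succ k hmk ih => exact hU _ (ih (h.mono le_rfl k.le_succ)) _ (h k k.lt_succ_self)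

theorem exists_pos_isPseudoOrbit_ne_self (hf : Continuous f) {x p : X} (hxp : x ≠ p)
    (hx : Tendsto (fun n => f^[n] x) atTop (𝓝 p)) {κ : ℝ} (hκ0 : 0 ≤ κ) (hκ1 : κ < 1)
    (htrap : ∀ᶠ y in 𝓝 p, dist (f y) p ≤ κ * dist y p) :
    ∃ ε > 0, ∀ (n : ℕ) (z : ℕ → X), 0 < n → z 0 = x → IsPseudoOrbit f ε n z → z n ≠ x := by
  obtain ⟨δ, hδ, hδtrap⟩ := Metric.eventually_nhds_iff.1 htrap
  set r := min (δ / 2) (dist x p / 2)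
  have hr : 0 < r := lt_min (half_pos hδ) (half_pos (dist_pos.2 hxp))
  have hrδ : r < δ := (min_le_left _ _).trans_lt (half_lt_self hδ)
  have hrx : r < dist x p := (min_le_right _ _).trans_lt (half_lt_self (dist_pos.2 hxp))
  -- `f` maps `closedBall p r` into `closedBall p (κ r)`, so errors up to `(1 - κ) r` cannot
  -- leave the ball.
  have habsorb : ∀ y ∈ Metric.closedBall p r, ∀ w, dist (f y) w ≤ (1 - κ) * r →
      w ∈ Metric.closedBall p r := by
    intro y hy w hw
    have hfy : dist (f y) p ≤ κ * r :=
      (hδtrap (lt_of_le_of_lt hy hrδ)).trans (mul_le_mul_of_nonneg_left hy hκ0)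
    calc dist w p ≤ dist (f y) w + dist (f y) p := dist_triangle_left _ _ _
      _ ≤ (1 - κ) * r + κ * r := add_le_add hw hfy
      _ = r := by ring
  obtain ⟨N, hN⟩ : ∃ N, dist (f^[N] x) p < r / 2 :=
    (hx.eventually (Metric.ball_mem_nhds p (half_pos hr))).exists
  obtain ⟨ε, hε, hshadow⟩ := dist_iterate_lt_of_isPseudoOrbit hf x N (half_pos hr)
  refine ⟨min ε ((1 - κ) * r), lt_min hε (mul_pos (sub_pos.2 hκ1) hr),
    fun n z hn hz hzε hzn => ?_⟩
  -- Repeating the loop `N` times gives a pseudo-orbit which shadows the orbit of `x` into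
  -- the absorbing ball and then comes back to `x`.
  have hloop := hzε.comp_mod hn (hzn.trans hz.symm) (N * n)
  have hNn : N ≤ N * n := Nat.le_mul_of_pos_right N hn
  have hzN : z (N % n) ∈ Metric.closedBall p r := by
    have hclose := hshadow _ (by simpa using hz) (hloop.mono (min_le_left _ _) hNn)
    calc dist (z (N % n)) p ≤ dist (z (N % n)) (f^[N] x) + dist (f^[N] x) p :=
          dist_triangle _ _ _
      _ ≤ r / 2 + r / 2 := add_le_add hclose.le hN.le
      _ = r := add_halves r
  have hback := (hloop.mono (min_le_right _ _) le_rfl).mem_of_mem habsorb hzN hNn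
  simp only [Nat.mul_mod_left, hz, Metric.mem_closedBall] at hback
  exact hback.not_gt hrx

theorem tendsto_iterate_of_dist_le_mul {g : X → X} {K : Set X}
    {ρ : X → ℝ} {p : X} (hK : IsCompact K) (hgK : MapsTo g K K) (hρ : ContinuousOn ρ K)
    (hρ1 : ∀ y ∈ K, ρ y < 1) (hg : ∀ y ∈ K, dist (g y) p ≤ ρ y * dist y p) {y : X}
    (hy : y ∈ K) : Tendsto (fun n => g^[n] y) atTop (𝓝 p) := by
  obtain ⟨a, ha, hmax⟩ := hK.exists_isMaxOn ⟨y, hy⟩ hρ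
  set κ := max (ρ a) 0
  have hcontr : ∀ w ∈ K, dist (g w) p ≤ κ * dist w p := fun w hw =>
    (hg w hw).trans (mul_le_mul_of_nonneg_right ((hmax hw).trans (le_max_left _ _))
      dist_nonneg)
  have hgeom : ∀ n, dist (g^[n] y) p ≤ κ ^ n * dist y p := by
    intro n
    induction n with
    | zero => simp
    | succ n ih =>
      rw [Function.iterate_succ_apply', pow_succ', mul_assoc]
      exact (hcontr _ (hgK.iterate n hy)).trans
        (mul_le_mul_of_nonneg_left ih (le_max_right _ _))
  rw [tendsto_iff_dist_tendsto_zero]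
  refine squeeze_zero (fun n => dist_nonneg) hgeom ?_
  simpa using (tendsto_pow_atTop_nhds_zero_of_lt_one (le_max_right _ _)
    (max_lt (hρ1 a ha) one_pos)).mul_const (dist y p)

end Dynamics

theorem tendsto_iterate_of_tendsto_iterate_iterate {α : Type*} [TopologicalSpace α]
    {f : α → α} {m : ℕ} (hm : m ≠ 0) {y p : α}
    (h : ∀ r < m, Tendsto (fun k => (f^[m])^[k] (f^[r] y)) atTop (𝓝 p)) :
    Tendsto (fun n => f^[n] y) atTop (𝓝 p) := by
  refine tendsto_iff_forall_eventually_mem.2 fun s hs => ?_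
  have hall : ∀ᶠ k in atTop, ∀ r : Fin m, (f^[m])^[k] (f^[r] y) ∈ s :=
    eventually_all.2 fun r => (h r r.2).eventually_mem hs
  filter_upwards [(Nat.tendsto_div_const_atTop hm).eventually hall] with n hn
  have := hn ⟨n % m, Nat.mod_lt n (Nat.pos_of_ne_zero hm)⟩
  rwa [← Function.iterate_mul, ← Function.iterate_add_apply, Nat.div_add_mod] at this

theorem HasFDerivAt.eventually_dist_le_mul {𝕜 E : Type*} [NontriviallyNormedField 𝕜]
    [NormedAddCommGroup E] [NormedSpace 𝕜 E] {f : E → E} {f' : E →L[𝕜] E} {p : E}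
    (hf : HasFDerivAt f f' p) (hp : f p = p) {c : ℝ} (hc : ‖f'‖ < c) :
    ∀ᶠ y in 𝓝 p, dist (f y) p ≤ c * dist y p := by
  filter_upwards [hf.isLittleO.bound (sub_pos.2 hc)] with y hy
  rw [hp] at hy
  rw [dist_eq_norm, dist_eq_norm]
  calc ‖f y - p‖ = ‖(f y - p - f' (y - p)) + f' (y - p)‖ := by rw [sub_add_cancel]
    _ ≤ (c - ‖f'‖) * ‖y - p‖ + ‖f'‖ * ‖y - p‖ :=
        norm_add_le_of_le hy (f'.le_opNorm _)
    _ = c * ‖y - p‖ := by ring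

section Logistic

variable {μ : ℝ}

@[fun_prop]
theorem continuous_logistic (μ : ℝ) : Continuous (logistic μ) := by
  unfold logistic; fun_prop

theorem hasDerivAt_logistic (μ x : ℝ) : HasDerivAt (logistic μ) (μ * (1 - 2 * x)) x := by
  have := ((hasDerivAt_id x).const_mul μ).mul ((hasDerivAt_id x).const_sub 1)
  exact this.congr_deriv (by simp only [id]; ring)

theorem logistic_le (hμ : 0 ≤ μ) (y : ℝ) : logistic μ y ≤ μ / 4 := by
  unfold logistic; nlinarith [sq_nonneg (1 - 2 * y)]

theorem logistic_sub_fixedPt (hμ : μ ≠ 0) (y : ℝ) :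
    logistic μ y - (1 - 1 / μ) = (y - (1 - 1 / μ)) * (1 - μ * y) := by
  unfold logistic; field_simp; ring

theorem logistic_fixedPt (hμ : μ ≠ 0) : logistic μ (1 - 1 / μ) = 1 - 1 / μ := by
  simpa [sub_eq_zero] using logistic_sub_fixedPt hμ (1 - 1 / μ)

theorem logistic_logistic_sub_fixedPt (hμ : μ ≠ 0) (y : ℝ) :
    logistic μ (logistic μ y) - (1 - 1 / μ) =
      (y - (1 - 1 / μ)) * ((1 - μ * y) * (1 - μ * logistic μ y)) := by
  rw [logistic_sub_fixedPt hμ, logistic_sub_fixedPt hμ]; ring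

theorem abs_two_step_factor_lt_one (hμ1 : 1 < μ) (hμ3 : μ < 3) {y : ℝ} (hy0 : 0 < y)
    (hyq : y ≤ μ / 4) : |(1 - μ * y) * (1 - μ * logistic μ y)| < 1 := by
  have hμy : μ * logistic μ y = μ * y * (μ - μ * y) := by unfold logistic; ring
  rw [hμy, abs_lt]
  set u := μ * y
  have hu0 : 0 < u := by positivity
  have huq : u ≤ μ ^ 2 / 4 := by nlinarith
  constructor
  · rcases le_total u 1 with hu1 | hu1
    · have : 0 < u ^ 2 - μ * u + 2 := by
        nlinarith [mul_nonneg (sub_nonneg.2 hu1) (by linarith : (0 : ℝ) ≤ 2 - u)]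
      nlinarith [mul_nonneg (sub_nonneg.2 hu1) this.le]
    · have hμ2 : 2 ≤ μ := by nlinarith
      have hquartic : μ ^ 4 - 4 * μ ^ 3 + 16 ≤ 0 := by
        nlinarith [sq_nonneg (μ - 2), mul_nonneg (sub_nonneg.2 hμ2) (sub_nonneg.2 hμ3.le)]
      -- `μ u - u² - 1` is concave and nonnegative at both ends of `[1, μ²/4]`.
      have : 0 ≤ μ * u - u ^ 2 - 1 := by
        nlinarith [mul_nonneg (sub_nonneg.2 hu1) (sub_nonneg.2 huq)]
      nlinarith [mul_nonneg (sub_nonneg.2 hu1) this]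
  · -- the discriminant of `u² - (μ + 1) u + (μ + 1)` is `(μ + 1)(μ - 3) < 0`
    nlinarith [mul_pos hu0
      (show 0 < (u - (μ + 1) / 2) ^ 2 + (μ + 1) * (3 - μ) / 4 by positivity)]

theorem logistic_sub_logistic (μ x y : ℝ) :
    logistic μ x - logistic μ y = μ * (x - y) * (1 - x - y) := by
  unfold logistic; ring

theorem mapsTo_logistic_Icc (hμ : 0 < μ) {a : ℝ} (ha : 0 ≤ a) (hap : a ≤ 1 - 1 / μ)
    (haq : a ≤ logistic μ (μ / 4)) :
    MapsTo (logistic μ) (Icc a (μ / 4)) (Icc a (μ / 4)) := by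
  intro y ⟨hay, hyq⟩
  refine ⟨?_, logistic_le hμ.le y⟩
  rcases le_or_gt y (1 / 2) with hy | hy
  · have hfa : a ≤ logistic μ a := by
      have h : logistic μ a - a = μ * a * (1 - 1 / μ - a) := by
        unfold logistic; field_simp; ring
      nlinarith [mul_nonneg (mul_nonneg hμ.le ha) (sub_nonneg.2 hap)]
    have := logistic_sub_logistic μ y a
    nlinarith [mul_nonneg (mul_nonneg hμ.le (sub_nonneg.2 hay))
      (by linarith : (0 : ℝ) ≤ 1 - y - a)]
  · have := logistic_sub_logistic μ y (μ / 4)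
    nlinarith [mul_nonneg (mul_nonneg hμ.le (sub_nonneg.2 hyq))
      (by linarith : (0 : ℝ) ≤ y + μ / 4 - 1)]

theorem tendsto_iterate_logistic (hμ1 : 1 < μ) (hμ3 : μ < 3) {x : ℝ} (hx0 : 0 < x)
    (hx1 : x < 1) : Tendsto (fun n => (logistic μ)^[n] x) atTop (𝓝 (1 - 1 / μ)) := by
  have hμ0 : 0 < μ := by linarith
  have hp : 0 < 1 - 1 / μ := by rw [sub_pos, div_lt_one hμ0]; exact hμ1
  have hpos : ∀ y, 0 < y → y < 1 → 0 < logistic μ y := fun y hy0 hy1 =>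
    mul_pos (mul_pos hμ0 hy0) (sub_pos.2 hy1)
  set a := min (min (logistic μ x) (1 - 1 / μ)) (logistic μ (μ / 4))
  set K := Icc a (μ / 4)
  have ha : 0 < a := lt_min (lt_min (hpos x hx0 hx1) hp) (hpos _ (by positivity) (by linarith))
  have hK : MapsTo (logistic μ) K K :=
    mapsTo_logistic_Icc hμ0 ha.le ((min_le_left _ _).trans (min_le_right _ _)) (min_le_right _ _)
  have hxK : logistic μ x ∈ K :=
    ⟨(min_le_left _ _).trans (min_le_left _ _), logistic_le hμ0.le x⟩
  have htwo : ∀ y ∈ K, Tendsto (fun k => ((logistic μ)^[2])^[k] y) atTop (𝓝 (1 - 1 / μ)) := by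
    refine fun y hy => tendsto_iterate_of_dist_le_mul isCompact_Icc (hK.iterate 2)
      (by fun_prop) (fun w hw => abs_two_step_factor_lt_one hμ1 hμ3 (ha.trans_le hw.1) hw.2)
      (fun w _ => ?_) hy
    rw [Real.dist_eq, Real.dist_eq, Function.iterate_succ_apply', Function.iterate_one,
      logistic_logistic_sub_fixedPt hμ0.ne', abs_mul, mul_comm]
  have hfx := tendsto_iterate_of_tendsto_iterate_iterate two_ne_zero
    fun r _ => htwo _ (hK.iterate r hxK)
  exact (tendsto_add_atTop_iff_nat 1).1 (by simpa only [Function.iterate_succ_apply] using hfx)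

theorem eventually_dist_logistic_le (hμ : μ ≠ 0) {c : ℝ} (hc : |2 - μ| < c) :
    ∀ᶠ y in 𝓝 (1 - 1 / μ), dist (logistic μ y) (1 - 1 / μ) ≤ c * dist y (1 - 1 / μ) := by
  have hderiv : HasDerivAt (logistic μ) (2 - μ) (1 - 1 / μ) :=
    (hasDerivAt_logistic μ _).congr_deriv (by field_simp; ring)
  refine hderiv.hasFDerivAt.eventually_dist_le_mul (logistic_fixedPt hμ) ?_
  rwa [ContinuousLinearMap.norm_toSpanSingleton, Real.norm_eq_abs]

end Logistic

section ChainRecurrent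

variable {f : ℝ → ℝ} {x : ℝ}

theorem ChainRecurrent.exists_isPseudoOrbit (h : ChainRecurrent f x) {ε : ℝ} (hε : 0 < ε) :
    ∃ (n : ℕ) (z : ℕ → ℝ), 0 < n ∧ z 0 = x ∧ IsPseudoOrbit f ε n z ∧ z n = x := by
  obtain ⟨n, hn, z, hz0, hzn, -, hz⟩ := h.2 ε hε
  exact ⟨n, z, hn, hz0, hz, hzn⟩

theorem ChainRecurrent.exists_abs_sub_le (h : ChainRecurrent f x) {ε : ℝ} (hε : 0 < ε) :
    ∃ y, |f y - x| ≤ ε := by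
  obtain ⟨n, hn, z, -, hzn, -, hz⟩ := h.2 ε hε
  have hlast := hz (n - 1) (by omega)
  rw [Nat.sub_add_cancel hn, hzn] at hlast
  exact ⟨_, hlast⟩

theorem ChainRecurrent.of_isFixedPt (hx : x ∈ Icc 0 1) (hfx : f x = x) : ChainRecurrent f x :=
  ⟨hx, fun _ hε => ⟨1, le_rfl, fun _ => x, rfl, rfl, fun _ _ => hx, fun _ _ => by
    simpa [hfx] using hε.le⟩⟩

end ChainRecurrent

theorem not_chainRecurrent_logistic {μ x : ℝ} (hμ1 : 1 < μ) (hμ3 : μ < 3) (hx0 : 0 < x)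
    (hx1 : x < 1) (hxp : x ≠ 1 - 1 / μ) : ¬ ChainRecurrent (logistic μ) x := by
  intro hx
  have hderiv : |2 - μ| < 1 := abs_sub_lt_iff.2 ⟨by linarith, by linarith⟩
  obtain ⟨ε, hε, hne⟩ := exists_pos_isPseudoOrbit_ne_self (continuous_logistic μ) hxp
    (tendsto_iterate_logistic hμ1 hμ3 hx0 hx1) (by positivity) (by linarith)
    (eventually_dist_logistic_le (by positivity) (c := (1 + |2 - μ|) / 2) (by linarith))
  obtain ⟨n, z, hn, hz0, hz, hzn⟩ := hx.exists_isPseudoOrbit hε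
  exact hne n z hn hz0 hz hzn

/-- For `μ ∈ (1,3)`, the chain-recurrent set of the logistic map on `[0,1]`
consists exactly of the two fixed points `0` and `1 - 1/μ`. -/
theorem chainRecurrent_set_logistic (μ : ℝ) (hμ : μ ∈ Set.Ioo (1 : ℝ) 3) :
    {x : ℝ | ChainRecurrent (logistic μ) x} = {0, 1 - 1 / μ} := by
  obtain ⟨hμ1, hμ3⟩ := hμ
  have hμ0 : 0 < μ := by linarith
  have hp : 1 - 1 / μ ∈ Icc (0 : ℝ) 1 :=
    ⟨by rw [sub_nonneg, div_le_one hμ0]; exact hμ1.le, by linarith [one_div_pos.2 hμ0]⟩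
  ext x
  simp only [mem_ofPred_eq, mem_insert_iff, mem_singleton_iff]
  refine ⟨fun hx => ?_, ?_⟩
  · by_contra! hne
    have hxq : x ≤ μ / 4 := le_of_forall_pos_le_add fun ε hε => by
      obtain ⟨y, hy⟩ := hx.exists_abs_sub_le hε
      linarith [logistic_le hμ0.le y, (abs_le.1 hy).1]
    exact not_chainRecurrent_logistic hμ1 hμ3 (hx.1.1.lt_of_ne' hne.1) (by linarith) hne.2 hx
  · rintro (rfl | rfl)
    · exact .of_isFixedPt ⟨le_rfl, zero_le_one⟩ (by simp [logistic])
    · exact .of_isFixedPt hp (logistic_fixedPt (by positivity))
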